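/- Let σ be an alternating bilinear form on V that tames J, and let W ⊆ V be a nonzero subspace such that β(σ) · sin(∠_M(W, JW)) < α(σ). Then for every nonzero x ∈ W one has σ(x, P_W(Jx)) > 0, where P_W denotes the orthogonal projection onto W; in particular, the restriction of σ to W is nondegenerate, i.e. W is a σ-symplectic subspace. -/

import Mathlib

/-- `α(σ) = inf{σ(x,Jx) : ‖x‖ = 1}` for a bilinear form `σ` and `J : V → V`. -/
noncomputable def alphaT {V : Type*} [NormedAddCommGroup V] [InnerProductSpace ℝ V]
    (J : V → V) (σ : V →ₗ[ℝ] V →ₗ[ℝ] ℝ) : ℝ :=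
  sInf {r : ℝ | ∃ x : V, ‖x‖ = 1 ∧ r = σ x (J x)}

/-- `β(σ) = sup{σ(x,y)/√(‖x‖²‖y‖² − ⟨x,y⟩²) : x, y linearly independent}`. -/
noncomputable def betaT {V : Type*} [NormedAddCommGroup V] [InnerProductSpace ℝ V]
    (σ : V →ₗ[ℝ] V →ₗ[ℝ] ℝ) : ℝ :=
  sSup {r : ℝ | ∃ x y : V, LinearIndependent ℝ ![x, y] ∧
    r = σ x y / Real.sqrt (‖x‖ ^ 2 * ‖y‖ ^ 2 - (inner ℝ x y : ℝ) ^ 2)}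

/-- `γ(σ) = α(σ)/β(σ)`. -/
noncomputable def gammaT {V : Type*} [NormedAddCommGroup V] [InnerProductSpace ℝ V]
    (J : V → V) (σ : V →ₗ[ℝ] V →ₗ[ℝ] ℝ) : ℝ :=
  alphaT J σ / betaT σ

/-- The angle `∠(x,y) = arccos(|⟨x,y⟩|/(‖x‖‖y‖)) ∈ [0,π/2]` between two vectors. -/
noncomputable def ang {V : Type*} [NormedAddCommGroup V] [InnerProductSpace ℝ V]
    (x y : V) : ℝ :=
  Real.arccos (|(inner ℝ x y : ℝ)| / (‖x‖ * ‖y‖))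

/-- The angle `∠_M(X,y) = inf{∠(x,y) : 0 ≠ x ∈ X}` between a subspace and a vector. -/
noncomputable def angMv {V : Type*} [NormedAddCommGroup V] [InnerProductSpace ℝ V]
    (X : Submodule ℝ V) (y : V) : ℝ :=
  sInf ((fun x => ang x y) '' {x : V | x ∈ X ∧ x ≠ 0})

/-- The maximal angle `∠_M(X,Y) = sup{∠_M(X,y) : 0 ≠ y ∈ Y}` between two subspaces. -/
noncomputable def angMM {V : Type*} [NormedAddCommGroup V] [InnerProductSpace ℝ V]
    (X Y : Submodule ℝ V) : ℝ :=
  sSup ((fun y => angMv X y) '' {y : V | y ∈ Y ∧ y ≠ 0})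

/-!
For `x ∈ W` split `J x = p + q` with `p = P_W (J x)` and `q ⟂ W`. Then
`σ(x, J x) ≥ α ‖x‖²` by the definition of `α`, `σ(x, q) ≤ β ‖x‖ ‖q‖` because `q ⟂ x`, and
`‖q‖ ≤ ‖J x‖ sin ∠_M(W, J x) ≤ ‖x‖ sin ∠_M(W, JW)`, since the cosine of the angle between `J x`
and any `w ∈ W` is at most `‖p‖ / ‖J x‖`. Hence
`σ(x, p) = σ(x, J x) - σ(x, q) ≥ (α - β sin ∠_M(W, JW)) ‖x‖² > 0`.
-/

open Real
open scoped RealInnerProductSpace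

section BilinearForm

variable {V : Type*} [NormedAddCommGroup V] [InnerProductSpace ℝ V]

lemma alphaT_mul_sq_norm_le {J : V →ₗ[ℝ] V} {σ : V →ₗ[ℝ] V →ₗ[ℝ] ℝ}
    (hnonneg : ∀ x, 0 ≤ σ x (J x)) (x : V) :
    alphaT J σ * ‖x‖ ^ 2 ≤ σ x (J x) := by
  rcases eq_or_ne x 0 with rfl | hx
  · simp
  have hbdd : BddBelow {r : ℝ | ∃ u : V, ‖u‖ = 1 ∧ r = σ u (J u)} :=
    ⟨0, by rintro _ ⟨u, -, rfl⟩; exact hnonneg u⟩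
  have hunit : ‖‖x‖⁻¹ • x‖ = 1 := by simp [norm_smul, hx]
  have hle := csInf_le hbdd ⟨_, hunit, rfl⟩
  have hscale : σ (‖x‖⁻¹ • x) (J (‖x‖⁻¹ • x)) = σ x (J x) / ‖x‖ ^ 2 := by
    simp only [map_smul, LinearMap.smul_apply, smul_eq_mul]
    field_simp
  rw [hscale, le_div_iff₀ (by positivity)] at hle
  exact hle

lemma exists_apply_le_mul_norm_mul_norm [FiniteDimensional ℝ V] (σ : V →ₗ[ℝ] V →ₗ[ℝ] ℝ) :
    ∃ C, 0 ≤ C ∧ ∀ x y, σ x y ≤ C * ‖x‖ * ‖y‖ := by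
  let B : V →L[ℝ] V →L[ℝ] ℝ :=
    LinearMap.toContinuousLinearMap (LinearMap.toContinuousLinearMap.toLinearMap.comp σ)
  exact ⟨‖B‖, norm_nonneg B, fun x y => (le_abs_self _).trans (B.le_opNorm₂ x y)⟩

lemma sqrt_gram_eq_norm_mul_norm_sub_smul (x y : V) :
    √(‖x‖ ^ 2 * ‖y‖ ^ 2 - ⟪x, y⟫ ^ 2) = ‖x‖ * ‖y - (⟪x, y⟫ / ‖x‖ ^ 2) • x‖ := by
  rcases eq_or_ne x 0 with rfl | hx
  · simp
  rw [← Real.sqrt_sq (by positivity : 0 ≤ ‖x‖ * ‖y - (⟪x, y⟫ / ‖x‖ ^ 2) • x‖), mul_pow,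
    ← real_inner_self_eq_norm_sq (y - _)]
  congr 1
  simp only [inner_sub_left, inner_sub_right, real_inner_smul_left, real_inner_smul_right,
    real_inner_self_eq_norm_sq, real_inner_comm x y, norm_smul, Real.norm_eq_abs, mul_pow,
    sq_abs]
  field_simp
  ring

lemma bddAbove_betaT_set [FiniteDimensional ℝ V] (σ : V →ₗ[ℝ] V →ₗ[ℝ] ℝ)
    (halt : ∀ x, σ x x = 0) :
    BddAbove {r : ℝ | ∃ x y : V, LinearIndependent ℝ ![x, y] ∧
      r = σ x y / Real.sqrt (‖x‖ ^ 2 * ‖y‖ ^ 2 - (inner ℝ x y : ℝ) ^ 2)} := by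
  obtain ⟨C, hC0, hC⟩ := exists_apply_le_mul_norm_mul_norm σ
  refine ⟨C, ?_⟩
  rintro _ ⟨x, y, -, rfl⟩
  have hσ : σ x y = σ x (y - (⟪x, y⟫ / ‖x‖ ^ 2) • x) := by simp [halt]
  refine div_le_of_le_mul₀ (Real.sqrt_nonneg _) hC0 ?_
  rw [sqrt_gram_eq_norm_mul_norm_sub_smul, hσ, ← mul_assoc]
  exact hC _ _

variable [FiniteDimensional ℝ V] {σ : V →ₗ[ℝ] V →ₗ[ℝ] ℝ}

lemma apply_le_betaT_mul_of_inner_eq_zero (halt : ∀ x, σ x x = 0) {x y : V}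
    (h : ⟪x, y⟫ = 0) : σ x y ≤ betaT σ * (‖x‖ * ‖y‖) := by
  rcases eq_or_ne x 0 with rfl | hx
  · simp
  rcases eq_or_ne y 0 with rfl | hy
  · simp
  have hindep : LinearIndependent ℝ ![x, y] :=
    linearIndependent_of_ne_zero_of_inner_eq_zero (fun i => by fin_cases i <;> simp [hx, hy])
      (fun i j hij => by fin_cases i <;> fin_cases j <;> simp_all [real_inner_comm x y])
  have hgram : √(‖x‖ ^ 2 * ‖y‖ ^ 2 - ⟪x, y⟫ ^ 2) = ‖x‖ * ‖y‖ := by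
    rw [h, ← mul_pow, zero_pow two_ne_zero, sub_zero, Real.sqrt_sq (by positivity)]
  have hle := le_csSup (bddAbove_betaT_set σ halt) ⟨x, y, hindep, rfl⟩
  rwa [hgram, div_le_iff₀ (by positivity)] at hle

lemma betaT_nonneg_of_inner_eq_zero (halt : ∀ x, σ x x = 0) {x y : V} (hx : x ≠ 0)
    (hy : y ≠ 0) (h : ⟪x, y⟫ = 0) : 0 ≤ betaT σ := by
  have hxy := apply_le_betaT_mul_of_inner_eq_zero halt h
  have hxny := apply_le_betaT_mul_of_inner_eq_zero halt (x := x) (y := -y) (by simp [h])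
  rw [map_neg, norm_neg] at hxny
  have : 0 < ‖x‖ * ‖y‖ := by positivity
  nlinarith

end BilinearForm

section Angle

variable {V : Type*} [NormedAddCommGroup V] [InnerProductSpace ℝ V]

lemma angMv_nonneg (X : Submodule ℝ V) (y : V) : 0 ≤ angMv X y :=
  Real.sInf_nonneg (by rintro _ ⟨x, -, rfl⟩; exact arccos_nonneg _)

lemma angMv_le_pi_div_two (X : Submodule ℝ V) (y : V) : angMv X y ≤ π / 2 := by
  rcases Set.eq_empty_or_nonempty ((fun x => ang x y) '' {x : V | x ∈ X ∧ x ≠ 0})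
    with hempty | ⟨_, x, hx, rfl⟩
  · rw [angMv, hempty, Real.sInf_empty]
    positivity
  · exact csInf_le_of_le ⟨0, by rintro _ ⟨x, -, rfl⟩; exact arccos_nonneg _⟩ ⟨x, hx, rfl⟩
      (arccos_le_pi_div_two.2 (by positivity))

lemma angMM_le_pi_div_two (X Y : Submodule ℝ V) : angMM X Y ≤ π / 2 :=
  Real.sSup_le (by rintro _ ⟨y, -, rfl⟩; exact angMv_le_pi_div_two X y) (by positivity)

lemma angMv_le_angMM (X : Submodule ℝ V) {Y : Submodule ℝ V} {y : V} (hy : y ∈ Y)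
    (hy0 : y ≠ 0) : angMv X y ≤ angMM X Y :=
  le_csSup ⟨π / 2, by rintro _ ⟨z, -, rfl⟩; exact angMv_le_pi_div_two X z⟩ ⟨y, ⟨hy, hy0⟩, rfl⟩

variable {X : Submodule ℝ V} [X.HasOrthogonalProjection]

lemma arccos_norm_starProjection_div_le_ang {x : V} (hx : x ∈ X) (hx0 : x ≠ 0) (y : V) :
    arccos (‖X.starProjection y‖ / ‖y‖) ≤ ang x y := by
  refine arccos_le_arccos ?_
  have hinner : ⟪x, y⟫ = ⟪x, X.starProjection y⟫ := by
    rw [← Submodule.inner_starProjection_left_eq_right, Submodule.starProjection_eq_self_iff.2 hx]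
  have hxn : 0 < ‖x‖ := norm_pos_iff.2 hx0
  calc |⟪x, y⟫| / (‖x‖ * ‖y‖) ≤ ‖x‖ * ‖X.starProjection y‖ / (‖x‖ * ‖y‖) := by
        rw [hinner]
        gcongr
        exact abs_real_inner_le_norm _ _
    _ = ‖X.starProjection y‖ / ‖y‖ := mul_div_mul_left _ _ hxn.ne'

lemma norm_sub_starProjection_le_mul_sin_angMv (hX : X ≠ ⊥) (y : V) :
    ‖y - X.starProjection y‖ ≤ ‖y‖ * sin (angMv X y) := by
  rcases eq_or_ne y 0 with rfl | hy
  · simp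
  obtain ⟨x, hx, hx0⟩ := (Submodule.ne_bot_iff X).1 hX
  have hyn : 0 < ‖y‖ := norm_pos_iff.2 hy
  have hpyth : ‖y‖ ^ 2 = ‖X.starProjection y‖ ^ 2 + ‖y - X.starProjection y‖ ^ 2 := by
    rw [← Submodule.starProjection_orthogonal_val]
    exact X.norm_sq_eq_add_norm_sq_starProjection y
  have hsin : ‖y‖ * sin (arccos (‖X.starProjection y‖ / ‖y‖)) = ‖y - X.starProjection y‖ := by
    have hcos : 1 - (‖X.starProjection y‖ / ‖y‖) ^ 2 = (‖y - X.starProjection y‖ / ‖y‖) ^ 2 := by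
      field_simp
      linarith
    rw [sin_arccos, hcos, Real.sqrt_sq (by positivity)]
    field_simp
  have harccos : arccos (‖X.starProjection y‖ / ‖y‖) ≤ angMv X y :=
    le_csInf ⟨_, x, ⟨hx, hx0⟩, rfl⟩
      (by rintro _ ⟨z, ⟨hz, hz0⟩, rfl⟩; exact arccos_norm_starProjection_div_le_ang hz hz0 y)
  rw [← hsin]
  gcongr
  exact sin_le_sin_of_le_of_le_pi_div_two
    (by linarith [arccos_nonneg (‖X.starProjection y‖ / ‖y‖), pi_pos])
    (angMv_le_pi_div_two X y) harccos

lemma norm_sub_starProjection_le_mul_sin_angMM (hX : X ≠ ⊥) {Y : Submodule ℝ V} {y : V}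
    (hy : y ∈ Y) : ‖y - X.starProjection y‖ ≤ ‖y‖ * sin (angMM X Y) := by
  rcases eq_or_ne y 0 with rfl | hy0
  · simp
  refine (norm_sub_starProjection_le_mul_sin_angMv hX y).trans ?_
  gcongr
  exact sin_le_sin_of_le_of_le_pi_div_two (by linarith [angMv_nonneg X y, pi_pos])
    (angMM_le_pi_div_two X Y) (angMv_le_angMM X hy hy0)

end Angle

theorem stmt14_general {V : Type*} [NormedAddCommGroup V] [InnerProductSpace ℝ V]
    [FiniteDimensional ℝ V]
    (J : V →ₗ[ℝ] V) (hiso : ∀ x : V, ‖J x‖ = ‖x‖)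
    (σ : V →ₗ[ℝ] V →ₗ[ℝ] ℝ) (halt : ∀ x : V, σ x x = 0)
    (htame : ∀ x : V, x ≠ 0 → 0 < σ x (J x))
    (W : Submodule ℝ V)
    (hangle : betaT σ * Real.sin (angMM W (W.map J)) < alphaT (⇑J) σ) :
    (∀ x ∈ W, x ≠ 0 → 0 < σ x ((Submodule.orthogonalProjectionOnto W (J x) : W) : V)) ∧
    (∀ x ∈ W, x ≠ 0 → ∃ y ∈ W, σ x y ≠ 0) := by
  have key : ∀ x ∈ W, x ≠ 0 → 0 < σ x (W.starProjection (J x)) := by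
    intro x hxW hx0
    set q := J x - W.starProjection (J x)
    have hsplit : σ x (W.starProjection (J x)) = σ x (J x) - σ x q := by simp [q]
    rw [hsplit, sub_pos]
    by_cases hq0 : q = 0
    · simpa [hq0] using htame x hx0
    have hxq : ⟪x, q⟫ = 0 := by
      rw [real_inner_comm]
      exact W.starProjection_inner_eq_zero _ _ hxW
    have hqle : ‖q‖ ≤ ‖x‖ * sin (angMM W (W.map J)) :=
      hiso x ▸ norm_sub_starProjection_le_mul_sin_angMM ((Submodule.ne_bot_iff W).2 ⟨x, hxW, hx0⟩)
        (Submodule.mem_map_of_mem hxW)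
    have hβ := betaT_nonneg_of_inner_eq_zero halt hx0 hq0 hxq
    have hxn : 0 < ‖x‖ := norm_pos_iff.2 hx0
    calc σ x q ≤ betaT σ * (‖x‖ * ‖q‖) := apply_le_betaT_mul_of_inner_eq_zero halt hxq
      _ ≤ betaT σ * sin (angMM W (W.map J)) * ‖x‖ ^ 2 := by
        rw [mul_assoc, sq, mul_comm (sin _), mul_assoc]
        gcongr
      _ < alphaT J σ * ‖x‖ ^ 2 := by gcongr
      _ ≤ σ x (J x) := alphaT_mul_sq_norm_le
        (fun y => (eq_or_ne y 0).elim (fun hy => by simp [hy]) (fun hy => (htame y hy).le)) x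
  exact ⟨key, fun x hxW hx0 => ⟨_, W.starProjection_apply_mem _, (key x hxW hx0).ne'⟩⟩

theorem stmt14 {V : Type*} [NormedAddCommGroup V] [InnerProductSpace ℝ V]
    [FiniteDimensional ℝ V]
    (J : V →ₗ[ℝ] V) (hiso : ∀ x : V, ‖J x‖ = ‖x‖) (hsq : ∀ x : V, J (J x) = -x)
    (σ : V →ₗ[ℝ] V →ₗ[ℝ] ℝ) (halt : ∀ x : V, σ x x = 0)
    (htame : ∀ x : V, x ≠ 0 → 0 < σ x (J x))
    (W : Submodule ℝ V) (hW : W ≠ ⊥)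
    (hangle : betaT σ * Real.sin (angMM W (W.map J)) < alphaT (⇑J) σ) :
    (∀ x ∈ W, x ≠ 0 → 0 < σ x ((Submodule.orthogonalProjectionOnto W (J x) : W) : V)) ∧
    (∀ x ∈ W, x ≠ 0 → ∃ y ∈ W, σ x y ≠ 0) :=
  stmt14_general J hiso σ halt htame W hangle
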